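/- (Degenerate Fay identity) For z, x, y with the relevant theta values nonzero, φ(z,x)φ(z,y) = φ(z,x+y)·(E₁(z) + E₁(x) + E₁(y) − E₁(x+y+z)), where E₁(u) = θ'(u)/θ(u). -/

import Mathlib

/-!
Multiplying the theta series of `θ(x+y)` and `θ(x-y)` and regrouping by the exponents
`(p, q)` of `e^{2πix}` and `e^{2πiy}` gives a double series whose terms are products of
Gaussian factors in `p` and in `q`, times the sign `χ(p, q) = (-1)^p` if `p + q` is odd and
`0` otherwise. This sign satisfies `χ(p,q)χ(r,s) = χ(p,r)χ(q,s) - χ(p,s)χ(q,r)`, which yields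
Weierstrass's three-term identity for `θ`. Specialised suitably, it becomes a trisecant identity
in an extra variable `t` with a factor `θ(t)` on one side; differentiating at `t = 0`, where `θ`
vanishes, gives the degenerate Fay identity with its denominators cleared.
-/

open Complex

/-- The odd theta function
`θ(u) = −∑_{k∈ℤ} exp(πiτ(k+1/2)² + 2πi(k+1/2)(u+1/2))`. -/
noncomputable def jtheta (τ u : ℂ) : ℂ :=
  -∑' k : ℤ, Complex.exp (Real.pi * Complex.I * τ * ((k : ℂ) + 1/2)^2 +
      2 * Real.pi * Complex.I * ((k : ℂ) + 1/2) * (u + 1/2))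


/-- The Kronecker elliptic function `φ(u,x) = θ'(0)θ(u+x)/(θ(u)θ(x))`. -/
noncomputable def kron (τ u x : ℂ) : ℂ :=
  deriv (jtheta τ) 0 * jtheta τ (u + x) / (jtheta τ u * jtheta τ x)


/-- The first Eisenstein function `E₁(u) = θ'(u)/θ(u)`. -/
noncomputable def E1 (τ u : ℂ) : ℂ := deriv (jtheta τ) u / jtheta τ u

/-- The second Eisenstein function `E₂ = −E₁'`. -/
noncomputable def E2 (τ u : ℂ) : ℂ := -deriv (E1 τ) u

noncomputable def oddSign (p q : ℤ) : ℂ := if Odd (p + q) then (-1) ^ p else 0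

theorem norm_oddSign_le (p q : ℤ) : ‖oddSign p q‖ ≤ 1 := by
  unfold oddSign
  split_ifs <;> simp

theorem oddSign_mul_oddSign (p q r s : ℤ) :
    oddSign p q * oddSign r s = oddSign p r * oddSign q s - oddSign p s * oddSign q r := by
  simp only [oddSign, neg_one_zpow_eq_ite, ← Int.not_even_iff_odd, Int.even_add]
  by_cases hp : Even p <;> by_cases hq : Even q <;> by_cases hr : Even r <;>
    by_cases hs : Even s <;> simp [hp, hq, hr, hs]

theorem neg_one_zpow_eq_exp (n : ℤ) : (-1 : ℂ) ^ n = exp (n * (Real.pi * I)) := by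
  rw [exp_int_mul, exp_pi_mul_I]

noncomputable def jthetaTerm (τ u : ℂ) (k : ℤ) : ℂ :=
  exp (Real.pi * I * τ * ((k : ℂ) + 1/2)^2 + 2 * Real.pi * I * ((k : ℂ) + 1/2) * (u + 1/2))

theorem jtheta_eq_neg_tsum (τ u : ℂ) : jtheta τ u = -∑' k, jthetaTerm τ u k := rfl

theorem jthetaTerm_eq (τ u : ℂ) (k : ℤ) :
    jthetaTerm τ u k = exp (Real.pi * I * τ / 4 + Real.pi * I * (u + 1/2)) *
      jacobiTheta₂_term k (u + 1/2 + τ/2) τ := by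
  rw [jthetaTerm, jacobiTheta₂_term, ← exp_add]
  ring_nf

theorem jtheta_eq_jacobiTheta₂ (τ u : ℂ) :
    jtheta τ u = -(exp (Real.pi * I * τ / 4 + Real.pi * I * (u + 1/2)) *
      jacobiTheta₂ (u + 1/2 + τ/2) τ) := by
  simp only [jtheta_eq_neg_tsum, jthetaTerm_eq, tsum_mul_left, jacobiTheta₂]

theorem differentiable_jtheta {τ : ℂ} (hτ : 0 < τ.im) : Differentiable ℂ (jtheta τ) := by
  rw [funext (jtheta_eq_jacobiTheta₂ τ)]
  refine (Differentiable.mul (by fun_prop) fun u ↦ ?_).neg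
  exact ((hasDerivAt_jacobiTheta₂_fst _ hτ).differentiableAt).comp u (by fun_prop)

theorem hasSum_jthetaTerm {τ : ℂ} (hτ : 0 < τ.im) (u : ℂ) :
    HasSum (jthetaTerm τ u) (-jtheta τ u) := by
  have hsum : Summable (jthetaTerm τ u) := by
    simpa only [← jthetaTerm_eq] using
      ((summable_jacobiTheta₂_term_iff (u + 1/2 + τ/2) τ).mpr hτ).mul_left
        (exp (Real.pi * I * τ / 4 + Real.pi * I * (u + 1/2)))
  rw [jtheta_eq_neg_tsum, neg_neg]
  exact hsum.hasSum

theorem summable_norm_jthetaTerm {τ : ℂ} (hτ : 0 < τ.im) (u : ℂ) :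
    Summable fun k ↦ ‖jthetaTerm τ u k‖ :=
  summable_norm_iff.mpr (hasSum_jthetaTerm hτ u).summable

theorem jthetaTerm_neg (τ u : ℂ) (k : ℤ) : jthetaTerm τ (-u) (-1 - k) = -jthetaTerm τ u k := by
  have hodd : Odd (-2 * k - 1) := ⟨-k - 1, by ring⟩
  rw [jthetaTerm, jthetaTerm, ← mul_neg_one (exp _), ← hodd.neg_one_zpow, neg_one_zpow_eq_exp,
    ← exp_add]
  push_cast
  ring_nf

theorem jtheta_neg (τ u : ℂ) : jtheta τ (-u) = -jtheta τ u := by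
  let e : ℤ ≃ ℤ := Function.Involutive.toPerm (fun k ↦ -1 - k) fun k ↦ by ring
  rw [jtheta_eq_neg_tsum, jtheta_eq_neg_tsum, ← e.tsum_eq]
  change -∑' k, jthetaTerm τ (-u) (-1 - k) = _
  simp only [jthetaTerm_neg, tsum_neg]

theorem jtheta_zero (τ : ℂ) : jtheta τ 0 = 0 := by
  simpa [eq_neg_iff_add_eq_zero, ← two_mul] using jtheta_neg τ 0

theorem deriv_jtheta_neg (τ u : ℂ) : deriv (jtheta τ) (-u) = deriv (jtheta τ) u := by
  have h := deriv_comp_neg (jtheta τ) u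
  simp only [jtheta_neg, deriv.fun_neg, neg_inj] at h
  exact h.symm

theorem jthetaTerm_mul_jthetaTerm (τ x y : ℂ) (k l : ℤ) :
    jthetaTerm τ (x + y) k * jthetaTerm τ (x - y) l = oddSign (k + l + 1) (k - l) *
      (jacobiTheta₂_term (k + l + 1) x (τ / 2) * jacobiTheta₂_term (k - l) y (τ / 2)) := by
  rw [oddSign, if_pos ⟨k, by ring⟩, neg_one_zpow_eq_exp, jthetaTerm, jthetaTerm,
    jacobiTheta₂_term, jacobiTheta₂_term, ← exp_add, ← exp_add, ← exp_add]
  push_cast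
  ring_nf

noncomputable def jthetaPairTerm (τ x y : ℂ) (pq : ℤ × ℤ) : ℂ :=
  oddSign pq.1 pq.2 * (jacobiTheta₂_term pq.1 x (τ / 2) * jacobiTheta₂_term pq.2 y (τ / 2))

theorem summable_norm_jthetaPairTerm {τ : ℂ} (hτ : 0 < τ.im) (x y : ℂ) :
    Summable fun pq ↦ ‖jthetaPairTerm τ x y pq‖ := by
  have hτ2 : 0 < (τ / 2).im := by simpa using hτ
  have hx := summable_norm_iff.mpr ((summable_jacobiTheta₂_term_iff x _).mpr hτ2)
  have hy := summable_norm_iff.mpr ((summable_jacobiTheta₂_term_iff y _).mpr hτ2)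
  refine (hx.mul_norm hy).of_nonneg_of_le (fun _ ↦ norm_nonneg _) fun pq ↦ ?_
  rw [jthetaPairTerm, norm_mul]
  exact mul_le_of_le_one_left (norm_nonneg _) (norm_oddSign_le _ _)

theorem hasSum_jthetaPairTerm {τ : ℂ} (hτ : 0 < τ.im) (x y : ℂ) :
    HasSum (jthetaPairTerm τ x y) (jtheta τ (x + y) * jtheta τ (x - y)) := by
  have hprod := (hasSum_jthetaTerm hτ (x + y)).mul (hasSum_jthetaTerm hτ (x - y))
    (summable_mul_of_summable_norm (summable_norm_jthetaTerm hτ _) (summable_norm_jthetaTerm hτ _))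
  rw [neg_mul_neg] at hprod
  let g : ℤ × ℤ → ℤ × ℤ := fun kl ↦ (kl.1 + kl.2 + 1, kl.1 - kl.2)
  have hg : Function.Injective g := by
    rintro ⟨k, l⟩ ⟨k', l'⟩ h
    simp only [g, Prod.mk.injEq] at h ⊢
    omega
  have hsupp : ∀ pq ∉ Set.range g, jthetaPairTerm τ x y pq = 0 := by
    rintro ⟨p, q⟩ hpq
    refine mul_eq_zero_of_left (if_neg fun ⟨m, hm⟩ ↦ hpq ⟨(m, p - m - 1), ?_⟩) _
    simp only [g, Prod.mk.injEq]
    omega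
  exact (hg.hasSum_iff hsupp).mp
    (hprod.congr_fun fun kl ↦ (jthetaTerm_mul_jthetaTerm τ x y kl.1 kl.2).symm)

theorem hasSum_jthetaPairTerm_mul {τ : ℂ} (hτ : 0 < τ.im) (x y u v : ℂ) :
    HasSum (fun w : (ℤ × ℤ) × (ℤ × ℤ) ↦ jthetaPairTerm τ x y w.1 * jthetaPairTerm τ u v w.2)
      (jtheta τ (x + y) * jtheta τ (x - y) * (jtheta τ (u + v) * jtheta τ (u - v))) :=
  (hasSum_jthetaPairTerm hτ x y).mul (hasSum_jthetaPairTerm hτ u v)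
    (summable_mul_of_summable_norm (summable_norm_jthetaPairTerm hτ x y)
      (summable_norm_jthetaPairTerm hτ u v))

/-- Expanded in `x, y, u, v`, the three products have the same terms up to their signs,
which are related by `oddSign_mul_oddSign`. -/
theorem jtheta_weierstrass {τ : ℂ} (hτ : 0 < τ.im) (x y u v : ℂ) :
    jtheta τ (x + y) * jtheta τ (x - y) * (jtheta τ (u + v) * jtheta τ (u - v)) =
      jtheta τ (x + u) * jtheta τ (x - u) * (jtheta τ (y + v) * jtheta τ (y - v)) -
        jtheta τ (x + v) * jtheta τ (x - v) * (jtheta τ (y + u) * jtheta τ (y - u)) := by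
  have hxu := (Equiv.prodProdProdComm ℤ ℤ ℤ ℤ).hasSum_iff.mpr
    (hasSum_jthetaPairTerm_mul hτ x u y v)
  have hxv := ((Equiv.prodCongr (Equiv.refl _) (Equiv.prodComm ℤ ℤ)).trans
    (Equiv.prodProdProdComm ℤ ℤ ℤ ℤ)).hasSum_iff.mpr (hasSum_jthetaPairTerm_mul hτ x v y u)
  refine (hasSum_jthetaPairTerm_mul hτ x y u v).unique ((hxu.sub hxv).congr_fun ?_)
  rintro ⟨⟨p, q⟩, ⟨r, s⟩⟩
  simp only [Function.comp_apply, Equiv.trans_apply, Equiv.prodCongr_apply, Equiv.coe_refl,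
    Equiv.prodComm_apply, Equiv.prodProdProdComm_apply, Prod.map, id, Prod.swap, jthetaPairTerm]
  linear_combination (jacobiTheta₂_term p x (τ / 2) * jacobiTheta₂_term q y (τ / 2) *
    (jacobiTheta₂_term r u (τ / 2) * jacobiTheta₂_term s v (τ / 2))) * oddSign_mul_oddSign p q r s

theorem jtheta_fay_trisecant {τ : ℂ} (hτ : 0 < τ.im) (z x y t : ℂ) :
    jtheta τ (z + x + t) * jtheta τ (z + y) * (jtheta τ (x + y) * jtheta τ t) =
      jtheta τ (z + x + y + t) * jtheta τ z * (jtheta τ x * jtheta τ (-y + t)) +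
        jtheta τ (z + x + y) * jtheta τ (z + t) * (jtheta τ (x + t) * jtheta τ y) := by
  have h := jtheta_weierstrass hτ (z + (x + y + t) / 2) ((x - y + t) / 2) ((x + y + t) / 2)
    ((x + y - t) / 2)
  ring_nf at h ⊢
  simp only [jtheta_neg] at h
  linear_combination h

theorem hasDerivAt_jtheta_const_add {τ : ℂ} (hτ : 0 < τ.im) (c : ℂ) :
    HasDerivAt (fun t ↦ jtheta τ (c + t)) (deriv (jtheta τ) c) 0 := by
  simpa using (differentiable_jtheta hτ (c + 0)).hasDerivAt.comp_const_add c 0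

/-- The `t`-derivative at `t = 0` of `jtheta_fay_trisecant`; on the left only `θ(t)`
contributes, since `θ(0) = 0`. -/
theorem jtheta_fay_degenerate {τ : ℂ} (hτ : 0 < τ.im) (z x y : ℂ) :
    deriv (jtheta τ) 0 * (jtheta τ (z + x) * jtheta τ (z + y) * jtheta τ (x + y)) =
      jtheta τ (x + y + z) * (deriv (jtheta τ) z * jtheta τ x * jtheta τ y +
        jtheta τ z * deriv (jtheta τ) x * jtheta τ y +
        jtheta τ z * jtheta τ x * deriv (jtheta τ) y) -
      deriv (jtheta τ) (x + y + z) * (jtheta τ z * jtheta τ x * jtheta τ y) := by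
  have hD := hasDerivAt_jtheta_const_add hτ
  have hL := ((hD (z + x)).mul_const (jtheta τ (z + y))).mul
    ((differentiable_jtheta hτ 0).hasDerivAt.const_mul (jtheta τ (x + y)))
  have hR := (((hD (z + x + y)).mul_const (jtheta τ z)).mul
    ((hD (-y)).const_mul (jtheta τ x))).add
    (((hD z).const_mul (jtheta τ (z + x + y))).mul ((hD x).mul_const (jtheta τ y)))
  have h := hL.unique (hR.congr_of_eventuallyEq
    (Filter.Eventually.of_forall (jtheta_fay_trisecant hτ z x y)))
  simp only [add_zero, jtheta_zero, jtheta_neg, deriv_jtheta_neg] at h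
  rw [show z + x + y = x + y + z by ring] at h
  linear_combination h

/-- Degeneration of the Fay identity. -/
theorem fay_degenerate (τ : ℂ) (hτ : 0 < τ.im) (z x y : ℂ)
    (hz : jtheta τ z ≠ 0) (hx : jtheta τ x ≠ 0) (hy : jtheta τ y ≠ 0)
    (hxy : jtheta τ (x + y) ≠ 0) (hxyz : jtheta τ (x + y + z) ≠ 0) :
    kron τ z x * kron τ z y =
      kron τ z (x + y) * (E1 τ z + E1 τ x + E1 τ y - E1 τ (x + y + z)) := by
  rw [kron, kron, kron, E1, E1, E1, E1, show z + (x + y) = x + y + z by ring]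
  field_simp
  linear_combination deriv (jtheta τ) 0 * jtheta_fay_degenerate hτ z x y
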